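/- arXiv:2205.14516 — 4 statements merged into one kernel-verified Lean document; each statement's English description precedes it below -/
import Mathlib

section
/- Let V ⊆ ℝ² be open, let θ ∈ ℝ, let F, G : V → ℝ be C¹ functions satisfying ∂F/∂t = ∂G/∂s on V, and let x, y : V → ℝ be C² functions satisfying the system ∂x/∂t + ∂y/∂s + θ·F = 0 and ∂y/∂t − ∂x/∂s + θ·G = 0 on V. Then x is harmonic on V, i.e. ∂²x/∂s² + ∂²x/∂t² = 0 at every point of V. -/
/-!
The system gives `∂x/∂s = ∂y/∂t + θG` and `∂x/∂t = -(∂y/∂s + θF)` on the open set `V`, hence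
near each point, so differentiating once more yields
`Δx = ∂²y/∂s∂t - ∂²y/∂t∂s + θ (∂G/∂s - ∂F/∂t)`,
which vanishes by the symmetry of second derivatives of `y` and the closedness of `F ds + G dt`.
-/

open Filter Topology

/-- Partial derivative of a function on `ℝ × ℝ` in the direction `v`. -/
noncomputable def pderiv2 (v : ℝ × ℝ) (f : ℝ × ℝ → ℝ) (p : ℝ × ℝ) : ℝ :=
  fderiv ℝ f p v

section pderiv2

variable {f g : ℝ × ℝ → ℝ} {p : ℝ × ℝ}

lemma pderiv2_congr_of_eventuallyEq (h : f =ᶠ[𝓝 p] g) (v : ℝ × ℝ) :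
    pderiv2 v f p = pderiv2 v g p := by
  rw [pderiv2, pderiv2, h.fderiv_eq]

lemma pderiv2_linear_combination (hf : DifferentiableAt ℝ f p) (hg : DifferentiableAt ℝ g p)
    (a b : ℝ) (v : ℝ × ℝ) :
    pderiv2 v (fun q => a * f q + b * g q) p = a * pderiv2 v f p + b * pderiv2 v g p := by
  simp only [pderiv2]
  rw [fderiv_fun_add (hf.const_mul a) (hg.const_mul b), fderiv_const_mul hf,
    fderiv_const_mul hg]
  rfl

lemma pderiv2_pderiv2_eq_fderiv_fderiv (hf : DifferentiableAt ℝ (fderiv ℝ f) p) (v w : ℝ × ℝ) :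
    pderiv2 w (pderiv2 v f) p = fderiv ℝ (fderiv ℝ f) p w v := by
  have h := (ContinuousLinearMap.apply ℝ ℝ v).hasFDerivAt.comp p hf.hasFDerivAt
  exact congrArg (· w) h.fderiv

lemma ContDiffAt.differentiableAt_fderiv (hf : ContDiffAt ℝ 2 f p) :
    DifferentiableAt ℝ (fderiv ℝ f) p :=
  (hf.fderiv_right (m := 1) le_rfl).differentiableAt one_ne_zero

lemma ContDiffAt.differentiableAt_pderiv2 (hf : ContDiffAt ℝ 2 f p) (v : ℝ × ℝ) :
    DifferentiableAt ℝ (pderiv2 v f) p :=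
  (ContinuousLinearMap.apply ℝ ℝ v).differentiableAt.comp p hf.differentiableAt_fderiv

lemma ContDiffAt.pderiv2_comm (hf : ContDiffAt ℝ 2 f p) (v w : ℝ × ℝ) :
    pderiv2 w (pderiv2 v f) p = pderiv2 v (pderiv2 w f) p := by
  rw [pderiv2_pderiv2_eq_fderiv_fderiv hf.differentiableAt_fderiv,
    pderiv2_pderiv2_eq_fderiv_fderiv hf.differentiableAt_fderiv,
    hf.isSymmSndFDerivAt (by simp) w v]

end pderiv2

theorem stmt0_general (V : Set (ℝ × ℝ)) (hV : IsOpen V) (θ : ℝ)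
    (F G x y : ℝ × ℝ → ℝ)
    (hF : ContDiffOn ℝ 1 F V) (hG : ContDiffOn ℝ 1 G V)
    (hy : ContDiffOn ℝ 2 y V)
    (hclosed : ∀ p ∈ V, pderiv2 (0, 1) F p = pderiv2 (1, 0) G p)
    (heq1 : ∀ p ∈ V, pderiv2 (0, 1) x p + pderiv2 (1, 0) y p + θ * F p = 0)
    (heq2 : ∀ p ∈ V, pderiv2 (0, 1) y p - pderiv2 (1, 0) x p + θ * G p = 0) :
    ∀ p ∈ V,
      pderiv2 (1, 0) (pderiv2 (1, 0) x) p + pderiv2 (0, 1) (pderiv2 (0, 1) x) p = 0 := by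
  intro p hp
  have hVp : V ∈ 𝓝 p := hV.mem_nhds hp
  have hyp : ContDiffAt ℝ 2 y p := hy.contDiffAt hVp
  have hFp : DifferentiableAt ℝ F p := (hF.contDiffAt hVp).differentiableAt one_ne_zero
  have hGp : DifferentiableAt ℝ G p := (hG.contDiffAt hVp).differentiableAt one_ne_zero
  have hxs : pderiv2 (1, 0) x =ᶠ[𝓝 p] fun q => 1 * pderiv2 (0, 1) y q + θ * G q := by
    filter_upwards [hVp] with q hq
    linarith [heq2 q hq]
  have hxt : pderiv2 (0, 1) x =ᶠ[𝓝 p] fun q => -1 * pderiv2 (1, 0) y q + -θ * F q := by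
    filter_upwards [hVp] with q hq
    linarith [heq1 q hq]
  rw [pderiv2_congr_of_eventuallyEq hxs, pderiv2_congr_of_eventuallyEq hxt,
    pderiv2_linear_combination (hyp.differentiableAt_pderiv2 _) hGp,
    pderiv2_linear_combination (hyp.differentiableAt_pderiv2 _) hFp,
    hyp.pderiv2_comm (1, 0) (0, 1), hclosed p hp]
  ring

/-- If `F, G` are `C¹` on an open set `V ⊆ ℝ²` with `∂F/∂t = ∂G/∂s` on `V`,
and `x, y` are `C²` on `V` solving `∂x/∂t + ∂y/∂s + θ·F = 0` and
`∂y/∂t − ∂x/∂s + θ·G = 0` on `V`, then `x` is harmonic on `V`. -/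
theorem stmt0 (V : Set (ℝ × ℝ)) (hV : IsOpen V) (θ : ℝ)
    (F G x y : ℝ × ℝ → ℝ)
    (hF : ContDiffOn ℝ 1 F V) (hG : ContDiffOn ℝ 1 G V)
    (hx : ContDiffOn ℝ 2 x V) (hy : ContDiffOn ℝ 2 y V)
    (hclosed : ∀ p ∈ V, pderiv2 (0, 1) F p = pderiv2 (1, 0) G p)
    (heq1 : ∀ p ∈ V, pderiv2 (0, 1) x p + pderiv2 (1, 0) y p + θ * F p = 0)
    (heq2 : ∀ p ∈ V, pderiv2 (0, 1) y p - pderiv2 (1, 0) x p + θ * G p = 0) :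
    ∀ p ∈ V,
      pderiv2 (1, 0) (pderiv2 (1, 0) x) p + pderiv2 (0, 1) (pderiv2 (0, 1) x) p = 0 :=
  stmt0_general V hV θ F G x y hF hG hy hclosed heq1 heq2
end

section
/- Let F, G : ℝ² → ℝ be functions. Suppose that for each p = (s,t,x,y) ∈ ℝ⁴ we are given a linear map J_p : ℝ⁴ → ℝ⁴ with J_p ∘ J_p = −id, J_p(e_x) = e_y, and J_p(e_s − x·F(s,t)·e_y) = e_t − x·G(s,t)·e_y. Let U ⊆ ℝ² be open, let x, y : U → ℝ be differentiable, and define u : U → ℝ⁴ by u(s,t) = (s, t, x(s,t), y(s,t)). Then J_{u(s,t)}(∂u/∂s(s,t)) = ∂u/∂t(s,t) for all (s,t) ∈ U if and only if the pair (x,y) solves the system ∂x/∂t + ∂y/∂s + x·F = 0 and ∂y/∂t − ∂x/∂s + x·G = 0 on U. -/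
/-! `J` is pinned down by its values on `e_x` and on the horizontal lift of `e_s`: with
`J e_y = -e_x` (from `J² = -1`) it sends `e_s + A e_x + B e_y` to `e_t + (-B - xF) e_x + (A - xG) e_y`.
The derivative of the section is `∂u/∂v = (v, ∂x/∂v, ∂y/∂v)`, so comparing the last two components of
`J (∂u/∂s)` and `∂u/∂t` gives the two equations. -/

/-- Partial derivative of a function on `ℝ × ℝ` in the direction `v`. -/
noncomputable def pd2 (v : ℝ × ℝ) (f : ℝ × ℝ → ℝ) (p : ℝ × ℝ) : ℝ :=
  fderiv ℝ f p v

abbrev R4 := ℝ × ℝ × ℝ × ℝ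

lemma LinearMap.apply_one_zero_of_sq_eq_neg_one (J : R4 →ₗ[ℝ] R4) (hJ2 : ∀ v, J (J v) = -v)
    (hJx : J (0, 0, 1, 0) = (0, 0, 0, 1)) {a b : ℝ}
    (hJs : J ((1, 0, 0, 0) - a • (0, 0, 0, 1)) = (0, 1, 0, 0) - b • (0, 0, 0, 1)) (A B : ℝ) :
    J (1, 0, A, B) = (0, 1, -B - a, A - b) := by
  have hJy : J (0, 0, 0, 1) = (0, 0, -1, 0) := by
    rw [← hJx, hJ2]
    simp
  have hdecomp : ((1, 0, A, B) : R4) =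
      ((1, 0, 0, 0) - a • (0, 0, 0, 1)) + A • (0, 0, 1, 0) + (B + a) • (0, 0, 0, 1) := by
    simp
  rw [hdecomp, map_add, map_add, map_smul, map_smul, hJs, hJx, hJy]
  ext <;> simp <;> ring

lemma fderiv_graph_apply {x y : ℝ × ℝ → ℝ} {p : ℝ × ℝ} (hx : DifferentiableAt ℝ x p)
    (hy : DifferentiableAt ℝ y p) (v : ℝ × ℝ) :
    fderiv ℝ (fun q : ℝ × ℝ => ((q.1, q.2, x q, y q) : R4)) p v =
      (v.1, v.2, fderiv ℝ x p v, fderiv ℝ y p v) := by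
  rw [(hasFDerivAt_fst.prodMk (hasFDerivAt_snd.prodMk
    (hx.hasFDerivAt.prodMk hy.hasFDerivAt))).fderiv]
  rfl

theorem stmt1_general (F G : ℝ × ℝ → ℝ)
    (J : (ℝ × ℝ × ℝ × ℝ) → ((ℝ × ℝ × ℝ × ℝ) →ₗ[ℝ] (ℝ × ℝ × ℝ × ℝ)))
    (hJ2 : ∀ p v, J p (J p v) = -v)
    (hJx : ∀ p, J p (0, 0, 1, 0) = (0, 0, 0, 1))
    (hJs : ∀ p : ℝ × ℝ × ℝ × ℝ,
      J p (((1, 0, 0, 0) : ℝ × ℝ × ℝ × ℝ) - (p.2.2.1 * F (p.1, p.2.1)) • (0, 0, 0, 1)) =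
        ((0, 1, 0, 0) : ℝ × ℝ × ℝ × ℝ) - (p.2.2.1 * G (p.1, p.2.1)) • (0, 0, 0, 1))
    (U : Set (ℝ × ℝ)) (x y : ℝ × ℝ → ℝ)
    (hx : ∀ p ∈ U, DifferentiableAt ℝ x p) (hy : ∀ p ∈ U, DifferentiableAt ℝ y p)
    (u : ℝ × ℝ → ℝ × ℝ × ℝ × ℝ) (hu : ∀ q : ℝ × ℝ, u q = (q.1, q.2, x q, y q)) :
    (∀ p ∈ U, J (u p) (fderiv ℝ u p (1, 0)) = fderiv ℝ u p (0, 1)) ↔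
      (∀ p ∈ U,
        pd2 (0, 1) x p + pd2 (1, 0) y p + x p * F p = 0 ∧
        pd2 (0, 1) y p - pd2 (1, 0) x p + x p * G p = 0) := by
  obtain rfl : u = fun q => (q.1, q.2, x q, y q) := funext hu
  refine forall₂_congr fun p hp => ?_
  rw [fderiv_graph_apply (hx p hp) (hy p hp), fderiv_graph_apply (hx p hp) (hy p hp),
    (J _).apply_one_zero_of_sq_eq_neg_one (hJ2 _) (hJx _) (hJs _)]
  simp only [pd2, Prod.mk.injEq, true_and]
  constructor <;> rintro ⟨h₁, h₂⟩ <;> constructor <;> linarith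

/-- the dictionary lemma: a section `u(s,t) = (s,t,x(s,t),y(s,t))` is
`J`-holomorphic iff `(x,y)` solves the first-order system
`∂x/∂t + ∂y/∂s + x·F = 0`, `∂y/∂t − ∂x/∂s + x·G = 0`. -/
theorem stmt1 (F G : ℝ × ℝ → ℝ)
    (J : (ℝ × ℝ × ℝ × ℝ) → ((ℝ × ℝ × ℝ × ℝ) →ₗ[ℝ] (ℝ × ℝ × ℝ × ℝ)))
    (hJ2 : ∀ p v, J p (J p v) = -v)
    (hJx : ∀ p, J p (0, 0, 1, 0) = (0, 0, 0, 1))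
    (hJs : ∀ p : ℝ × ℝ × ℝ × ℝ,
      J p (((1, 0, 0, 0) : ℝ × ℝ × ℝ × ℝ) - (p.2.2.1 * F (p.1, p.2.1)) • (0, 0, 0, 1)) =
        ((0, 1, 0, 0) : ℝ × ℝ × ℝ × ℝ) - (p.2.2.1 * G (p.1, p.2.1)) • (0, 0, 0, 1))
    (U : Set (ℝ × ℝ)) (hU : IsOpen U) (x y : ℝ × ℝ → ℝ)
    (hx : ∀ p ∈ U, DifferentiableAt ℝ x p) (hy : ∀ p ∈ U, DifferentiableAt ℝ y p)
    (u : ℝ × ℝ → ℝ × ℝ × ℝ × ℝ) (hu : ∀ q : ℝ × ℝ, u q = (q.1, q.2, x q, y q)) :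
    (∀ p ∈ U, J (u p) (fderiv ℝ u p (1, 0)) = fderiv ℝ u p (0, 1)) ↔
      (∀ p ∈ U,
        pd2 (0, 1) x p + pd2 (1, 0) y p + x p * F p = 0 ∧
        pd2 (0, 1) y p - pd2 (1, 0) x p + x p * G p = 0) :=
  stmt1_general F G J hJ2 hJx hJs U x y hx hy u hu
end

section
/- Let g : ℝ² → ℝ be C¹ and let c ∈ ℝ. For (s,t) ∈ ℝ² define the linear functional β_{(s,t)}(u) := (∂g/∂s)(s,t)·u_s + (∂g/∂t)(s,t)·u_t on ℝ⁴, and for p = (s,t,x,y) ∈ ℝ⁴ define the alternating bilinear form Ω_p(u,v) := (u_x·v_y − u_y·v_x) + x·(u_x·β_{(s,t)}(v) − β_{(s,t)}(u)·v_x). Define μ : ℝ⁴ → ℝ⁴ by μ(s,t,x,y) := (s, t, x − c, y + c·g(s,t)). Then μ pulls Ω back to itself: for every p ∈ ℝ⁴ and all u, v ∈ ℝ⁴, Ω_{μ(p)}(Dμ_p(u), Dμ_p(v)) = Ω_p(u,v), where Dμ_p denotes the Fréchet derivative of μ at p. -/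
/-!
Write `β = dg`. The shift pulls `dx ∧ dy` back to `dx ∧ (dy + c β) = dx ∧ dy + c dx ∧ β`, and
`½ x² β` back to `½ (x − c)² β`, whose differential is `d(½ x² β) − c dx ∧ β` because `dβ = 0`.
The two error terms cancel; pointwise this is a polynomial identity in the coordinates.
-/

/-- The linear functional `β_{(s,t)}(u) = g_s(s,t)·u_s + g_t(s,t)·u_t` on `ℝ⁴`. -/
noncomputable def betaForm (g : ℝ × ℝ → ℝ) (st : ℝ × ℝ) (u : ℝ × ℝ × ℝ × ℝ) : ℝ :=
  fderiv ℝ g st (1, 0) * u.1 + fderiv ℝ g st (0, 1) * u.2.1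

/-- The value at `p = (s,t,x,y)` of the fiberwise symplectic 2-form
`Ω = dx∧dy + d(½x²·dg)`. -/
noncomputable def OmegaForm (g : ℝ × ℝ → ℝ) (p u v : ℝ × ℝ × ℝ × ℝ) : ℝ :=
  (u.2.2.1 * v.2.2.2 - u.2.2.2 * v.2.2.1) +
    p.2.2.1 * (u.2.2.1 * betaForm g (p.1, p.2.1) v - betaForm g (p.1, p.2.1) u * v.2.2.1)

theorem map_prodMk_eq_smul_add_smul {R M F : Type*} [CommSemiring R] [AddCommMonoid M]
    [Module R M] [FunLike F (R × R) M] [LinearMapClass F R (R × R) M] (f : F) (a b : R) :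
    f (a, b) = a • f (1, 0) + b • f (0, 1) := by
  rw [← map_smul, ← map_smul, ← map_add]
  simp

theorem betaForm_eq_fderiv (g : ℝ × ℝ → ℝ) (st : ℝ × ℝ) (u : ℝ × ℝ × ℝ × ℝ) :
    betaForm g st u = fderiv ℝ g st (u.1, u.2.1) := by
  rw [betaForm, map_prodMk_eq_smul_add_smul (fderiv ℝ g st) u.1, smul_eq_mul, smul_eq_mul,
    mul_comm, mul_comm u.2.1]

def shiftMap (g : ℝ × ℝ → ℝ) (c : ℝ) (p : ℝ × ℝ × ℝ × ℝ) : ℝ × ℝ × ℝ × ℝ :=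
  (p.1, p.2.1, p.2.2.1 - c, p.2.2.2 + c * g (p.1, p.2.1))

theorem fderiv_shiftMap_apply {g : ℝ × ℝ → ℝ} {p : ℝ × ℝ × ℝ × ℝ}
    (hg : DifferentiableAt ℝ g (p.1, p.2.1)) (c : ℝ) (u : ℝ × ℝ × ℝ × ℝ) :
    fderiv ℝ (shiftMap g c) p u =
      (u.1, u.2.1, u.2.2.1, u.2.2.2 + c * betaForm g (p.1, p.2.1) u) := by
  have hsnd : HasFDerivAt (𝕜 := ℝ) (fun q : ℝ × ℝ × ℝ × ℝ => q.2) _ p := hasFDerivAt_snd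
  have hst : HasFDerivAt (fun q : ℝ × ℝ × ℝ × ℝ => (q.1, q.2.1)) _ p :=
    hasFDerivAt_fst.prodMk hsnd.fst
  have hμ : HasFDerivAt (shiftMap g c) _ p :=
    hasFDerivAt_fst.prodMk <| hsnd.fst.prodMk <| (hsnd.snd.fst.sub_const c).prodMk <|
      hsnd.snd.snd.add ((hg.hasFDerivAt.comp p hst).const_mul c)
  rw [hμ.fderiv, betaForm_eq_fderiv]
  simp

theorem OmegaForm_shiftMap (g : ℝ × ℝ → ℝ) (c : ℝ) (p u v : ℝ × ℝ × ℝ × ℝ) :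
    OmegaForm g (shiftMap g c p)
        (u.1, u.2.1, u.2.2.1, u.2.2.2 + c * betaForm g (p.1, p.2.1) u)
        (v.1, v.2.1, v.2.2.1, v.2.2.2 + c * betaForm g (p.1, p.2.1) v) =
      OmegaForm g p u v := by
  simp only [OmegaForm, shiftMap, betaForm]
  ring

/-- the shifting/translation trick: the diffeomorphism
`μ(s,t,x,y) = (s, t, x − c, y + c·g(s,t))` pulls the form `Ω` back to itself. -/
theorem stmt4 (g : ℝ × ℝ → ℝ) (hg : ContDiff ℝ 1 g) (c : ℝ)
    (μ : ℝ × ℝ × ℝ × ℝ → ℝ × ℝ × ℝ × ℝ)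
    (hμ : ∀ p : ℝ × ℝ × ℝ × ℝ, μ p = (p.1, p.2.1, p.2.2.1 - c, p.2.2.2 + c * g (p.1, p.2.1))) :
    ∀ (p u v : ℝ × ℝ × ℝ × ℝ),
      OmegaForm g (μ p) (fderiv ℝ μ p u) (fderiv ℝ μ p v) = OmegaForm g p u v := by
  intro p u v
  obtain rfl : μ = shiftMap g c := funext hμ
  have hgp : DifferentiableAt ℝ g (p.1, p.2.1) := hg.differentiable one_ne_zero _
  rw [fderiv_shiftMap_apply hgp, fderiv_shiftMap_apply hgp]
  exact OmegaForm_shiftMap g c p u v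
end

section
/- Let m > 0 and k ∈ ℝ, let N ≤ S be real numbers, and let χ : [N,∞) → ℝ be continuous with 0 ≤ χ(s) ≤ 1 for all s and χ(s) = 1 for all s ≥ S. Then: (a) there exists exactly one c ∈ ℝ for which there is a bounded differentiable function x : [N,∞) → ℝ with x(N) = c satisfying x'(s) = m·χ(s)·x(s) − k for all s ≥ N; and (b) every bounded differentiable solution x : [N,∞) → ℝ of this equation satisfies x(s) = k/m for all s ≥ S. -/
/-!
Multiplying by the integrating factor `exp (-∫ a)` shows that a solution of the linear equation
`x' = a x + b` on `[N, ∞)` is determined by its value at any single point, also one to the right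
of `N`. On `[S, ∞)`, where `χ = 1`, the function `x - k/m` grows like `exp (m s)` unless it
vanishes, so a bounded solution equals `k/m` there; this fixes `x S`, hence `x N`. Conversely,
solving backwards from `x S = k/m` gives a solution that is constant on `[S, ∞)`, hence bounded.
-/

open Set Real Filter

section LinearODE

variable {a b : ℝ → ℝ}

/-- The solution of `x' = a x + b` with `x t₀ = x₀`, by variation of constants. -/
noncomputable def linearODESol (a b : ℝ → ℝ) (t₀ x₀ : ℝ) (s : ℝ) : ℝ :=
  exp (∫ t in t₀..s, a t) * (x₀ + ∫ t in t₀..s, exp (-∫ u in t₀..t, a u) * b t)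

theorem linearODESol_self (a b : ℝ → ℝ) (t₀ x₀ : ℝ) : linearODESol a b t₀ x₀ t₀ = x₀ := by
  simp [linearODESol]

theorem hasDerivAt_linearODESol (ha : Continuous a) (hb : Continuous b) (t₀ x₀ s : ℝ) :
    HasDerivAt (linearODESol a b t₀ x₀) (a s * linearODESol a b t₀ x₀ s + b s) s := by
  have hA : ∀ t, HasDerivAt (fun t => ∫ u in t₀..t, a u) (a t) t := fun t =>
    (ha.integral_hasStrictDerivAt t₀ t).hasDerivAt
  have hAc : Continuous fun t => ∫ u in t₀..t, a u :=
    continuous_iff_continuousAt.2 fun t => (hA t).continuousAt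
  have hJ : HasDerivAt (fun s => ∫ t in t₀..s, exp (-∫ u in t₀..t, a u) * b t)
      (exp (-∫ u in t₀..s, a u) * b s) s :=
    (((hAc.neg.rexp).mul hb).integral_hasStrictDerivAt t₀ s).hasDerivAt
  refine (((hA s).exp).mul (hJ.const_add x₀)).congr_deriv ?_
  rw [linearODESol, mul_left_comm, ← mul_assoc, ← exp_add, neg_add_cancel, exp_zero, one_mul]
  ring

theorem eq_exp_integral_mul_of_hasDerivWithinAt {y : ℝ → ℝ} {N : ℝ} (ha : Continuous a)
    (hy : ∀ s ∈ Ici N, HasDerivWithinAt y (a s * y s) (Ici N) s) {s : ℝ} (hs : N ≤ s) :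
    y s = exp (∫ t in N..s, a t) * y N := by
  set A : ℝ → ℝ := fun s => ∫ t in N..s, a t with hA_def
  have hA : ∀ t, HasDerivAt A (a t) t := fun t => (ha.integral_hasStrictDerivAt N t).hasDerivAt
  have hg : ∀ t ∈ Ici N, HasDerivWithinAt (fun t => y t * exp (-A t)) 0 (Ici N) t := by
    intro t ht
    refine ((hy t ht).mul ((hA t).neg.exp.hasDerivWithinAt)).congr_deriv ?_
    ring
  have hconst : y s * exp (-A s) = y N * exp (-A N) := by
    refine constant_of_has_deriv_right_zero (f := fun t => y t * exp (-A t)) (fun t ht => ?_) (fun t ht => ?_) s ⟨hs, le_rfl⟩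
    · exact (hg t ht.1).continuousWithinAt.mono Icc_subset_Ici_self
    · exact (hg t ht.1).mono (Ici_subset_Ici.2 ht.1)
  have hAN : A N = 0 := intervalIntegral.integral_same
  rw [hAN, neg_zero, exp_zero, mul_one] at hconst
  rw [← hconst, mul_left_comm, ← exp_add, add_neg_cancel, exp_zero, mul_one]

theorem eqOn_of_hasDerivWithinAt_linear {x z : ℝ → ℝ} {N S : ℝ} (ha : Continuous a)
    (hNS : N ≤ S)
    (hx : ∀ s ∈ Ici N, HasDerivWithinAt x (a s * x s + b s) (Ici N) s)
    (hz : ∀ s ∈ Ici N, HasDerivWithinAt z (a s * z s + b s) (Ici N) s)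
    (hxz : x S = z S) : EqOn x z (Ici N) := by
  have hy : ∀ s ∈ Ici N, HasDerivWithinAt (x - z) (a s * (x - z) s) (Ici N) s := fun s hs =>
    ((hx s hs).sub (hz s hs)).congr_deriv (by simp only [Pi.sub_apply]; ring)
  have hN : (x - z) N = 0 := by
    have := eq_exp_integral_mul_of_hasDerivWithinAt ha hy hNS
    rwa [Pi.sub_apply, hxz, sub_self, eq_comm, mul_eq_zero, or_iff_right (exp_ne_zero _)] at this
  intro s hs
  have := eq_exp_integral_mul_of_hasDerivWithinAt ha hy hs
  rwa [hN, mul_zero, Pi.sub_apply, sub_eq_zero] at this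

end LinearODE

theorem eq_zero_of_abs_mul_exp_le {m c S C : ℝ} (hm : 0 < m)
    (hC : ∀ s ∈ Ici S, |c * exp (m * (s - S))| ≤ C) : c = 0 := by
  by_contra hc
  have hgrow : Tendsto (fun s => |c| * exp (m * (s - S))) atTop atTop :=
    (tendsto_exp_atTop.comp ((tendsto_id.atTop_add tendsto_const_nhds).const_mul_atTop hm)).const_mul_atTop
      (abs_pos.2 hc)
  obtain ⟨s, hsS, hsC⟩ := ((eventually_ge_atTop S).and (hgrow.eventually_gt_atTop C)).exists
  have := hC s hsS
  rw [abs_mul, abs_exp] at this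
  exact absurd this (not_le.2 hsC)

theorem eq_div_of_hasDerivWithinAt_of_bounded {m k S C : ℝ} {x : ℝ → ℝ} (hm : 0 < m)
    (hx : ∀ s ∈ Ici S, HasDerivWithinAt x (m * x s - k) (Ici S) s)
    (hC : ∀ s ∈ Ici S, |x s| ≤ C) {s : ℝ} (hs : S ≤ s) : x s = k / m := by
  have hy : ∀ s ∈ Ici S, HasDerivWithinAt (fun s => x s - k / m) (m * (x s - k / m)) (Ici S) s :=
    fun s hs => ((hx s hs).sub_const _).congr_deriv (by field_simp)
  have hform : ∀ s ∈ Ici S, x s - k / m = (x S - k / m) * exp (m * (s - S)) := fun s hs => by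
    rw [eq_exp_integral_mul_of_hasDerivWithinAt continuous_const hy hs,
      intervalIntegral.integral_const, smul_eq_mul, mul_comm m, mul_comm]
  have hS : x S - k / m = 0 := by
    refine eq_zero_of_abs_mul_exp_le (S := S) (C := C + |k / m|) hm fun s hs => ?_
    rw [← hform s hs]
    linarith [abs_sub (x s) (k / m), hC s hs]
  rw [← sub_eq_zero, hform s hs, hS, zero_mul]

theorem exists_abs_le_of_continuous_of_eq_const_on_Ici {f : ℝ → ℝ} {N S c : ℝ}
    (hf : Continuous f) (hc : ∀ s, S ≤ s → f s = c) : ∃ C : ℝ, ∀ s ∈ Ici N, |f s| ≤ C := by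
  obtain ⟨C, hC⟩ := (isCompact_Icc (a := N) (b := S)).exists_bound_of_continuousOn hf.continuousOn
  refine ⟨max C |c|, fun s hs => ?_⟩
  rcases le_total s S with h | h
  · exact (hC s ⟨hs, h⟩).trans (le_max_left _ _)
  · rw [hc s h]; exact le_max_right _ _

theorem stmt6_general (m k N S : ℝ) (hm : 0 < m) (hNS : N ≤ S) (χ : ℝ → ℝ)
    (hχcont : ContinuousOn χ (Set.Ici N))
    (hχ1 : ∀ s, S ≤ s → χ s = 1) :
    (∃! c : ℝ, ∃ x : ℝ → ℝ, x N = c ∧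
        (∀ s ∈ Set.Ici N, HasDerivWithinAt x (m * χ s * x s - k) (Set.Ici N) s) ∧
        (∃ C : ℝ, ∀ s ∈ Set.Ici N, |x s| ≤ C)) ∧
      (∀ x : ℝ → ℝ,
        (∀ s ∈ Set.Ici N, HasDerivWithinAt x (m * χ s * x s - k) (Set.Ici N) s) →
        (∃ C : ℝ, ∀ s ∈ Set.Ici N, |x s| ≤ C) →
        ∀ s, S ≤ s → x s = k / m) := by
  have hsub : Ici S ⊆ Ici N := Ici_subset_Ici.2 hNS
  -- `χ` is only continuous on `[N, ∞)`; extending it by `χ N` makes the integrating factor global.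
  set χ' : ℝ → ℝ := fun t => χ (max N t)
  have hχ'eq : ∀ s ∈ Ici N, χ' s = χ s := fun s hs => congrArg χ (max_eq_right hs)
  have ha : Continuous fun t => m * χ' t := continuous_const.mul <|
    hχcont.comp_continuous (continuous_const.max continuous_id) fun t => le_max_left N t
  have hlin : ∀ x : ℝ → ℝ, (∀ s ∈ Ici N, HasDerivWithinAt x (m * χ s * x s - k) (Ici N) s) ↔
      ∀ s ∈ Ici N, HasDerivWithinAt x (m * χ' s * x s + -k) (Ici N) s := fun x =>
    forall₂_congr fun s hs => by rw [hχ'eq s hs, ← sub_eq_add_neg]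
  have eq_of_bounded : ∀ x : ℝ → ℝ,
      (∀ s ∈ Ici N, HasDerivWithinAt x (m * χ s * x s - k) (Ici N) s) →
      (∃ C : ℝ, ∀ s ∈ Ici N, |x s| ≤ C) → ∀ s, S ≤ s → x s = k / m := by
    rintro x hx ⟨C, hC⟩ s hs
    refine eq_div_of_hasDerivWithinAt_of_bounded hm (fun t ht => ?_) (fun t ht => hC t (hsub ht)) hs
    simpa [hχ1 t ht] using (hx t (hsub ht)).mono hsub
  set x₀ := linearODESol (fun t => m * χ' t) (fun _ => -k) S (k / m)
  have hx₀ : ∀ s, HasDerivAt x₀ (m * χ' s * x₀ s + -k) s :=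
    hasDerivAt_linearODESol ha continuous_const S _
  have hx₀sol := (hlin x₀).2 fun s _ => (hx₀ s).hasDerivWithinAt
  have hx₀flat : ∀ s, S ≤ s → x₀ s = k / m := fun s hs =>
    eqOn_of_hasDerivWithinAt_linear ha le_rfl (fun t _ => (hx₀ t).hasDerivWithinAt)
      (fun t ht => (hasDerivWithinAt_const t _ (k / m)).congr_deriv (by
        rw [hχ'eq t (hsub ht), hχ1 t ht]; field_simp; ring))
      (linearODESol_self _ _ _ _) hs
  have hx₀bdd := exists_abs_le_of_continuous_of_eq_const_on_Ici (N := N)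
    (continuous_iff_continuousAt.2 fun s => (hx₀ s).continuousAt) hx₀flat
  refine ⟨⟨x₀ N, ⟨x₀, rfl, hx₀sol, hx₀bdd⟩, ?_⟩, eq_of_bounded⟩
  rintro c ⟨x, rfl, hx, hxbdd⟩
  exact eqOn_of_hasDerivWithinAt_linear ha hNS ((hlin x).1 hx) ((hlin x₀).1 hx₀sol)
    ((eq_of_bounded x hx hxbdd S le_rfl).trans (hx₀flat S le_rfl).symm) self_mem_Ici

/-- at the positive cylindrical end there is exactly one initial value `c`
admitting a bounded solution of `x' = m·χ(s)·x − k` on `[N,∞)`, and every bounded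
solution equals `k/m` on `[S,∞)`. -/
theorem stmt6 (m k N S : ℝ) (hm : 0 < m) (hNS : N ≤ S) (χ : ℝ → ℝ)
    (hχcont : ContinuousOn χ (Set.Ici N))
    (hχ01 : ∀ s ∈ Set.Ici N, 0 ≤ χ s ∧ χ s ≤ 1)
    (hχ1 : ∀ s, S ≤ s → χ s = 1) :
    (∃! c : ℝ, ∃ x : ℝ → ℝ, x N = c ∧
        (∀ s ∈ Set.Ici N, HasDerivWithinAt x (m * χ s * x s - k) (Set.Ici N) s) ∧
        (∃ C : ℝ, ∀ s ∈ Set.Ici N, |x s| ≤ C)) ∧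
      (∀ x : ℝ → ℝ,
        (∀ s ∈ Set.Ici N, HasDerivWithinAt x (m * χ s * x s - k) (Set.Ici N) s) →
        (∃ C : ℝ, ∀ s ∈ Set.Ici N, |x s| ≤ C) →
        ∀ s, S ≤ s → x s = k / m) :=
  stmt6_general m k N S hm hNS χ hχcont hχ1
end
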